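/- arXiv:2103.11370 — 2 statements merged into one kernel-verified Lean document; each statement's English description precedes it below -/
import Mathlib

section
/- For every dimension d ≥ 2, every horizon T ≥ 1, every D > 0 and G > 0, every switching budget S with D ≤ S < D√T, and every deterministic player strategy σ, there exist loss vectors m_1, …, m_T ∈ ℝ^d with ‖m_t‖ = G for all t such that, letting w_t = σ_t(m_1, …, m_{t−1}) be the player's actions, either the continuous switching constraint Σ_{t=2}^T ‖w_t − w_{t−1}‖ ≤ S is violated, or the regret satisfies R = Σ_{t=1}^T ⟨m_t, w_t⟩ − min_{w ∈ 𝒟} ⟨Σ_{t=1}^T m_t, w⟩ ≥ 0.05·D·G·(D·T/S). -/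
open scoped InnerProductSpace BigOperators

/-!
The adversary plays in blocks of `L ≈ D²T/(16S²)` rounds and uses the loss `G • uᵢ` throughout
block `i`, where `uᵢ` is a unit vector (one exists since `d ≥ 2`) with `⟪uᵢ, w⟫ ≥ 0` for the
player's action `w` at the start of the block and `⟪uᵢ, u₀ + ⋯ + uᵢ₋₁⟫ ≥ 0`. The first condition
makes the player's loss in a round at least `-G` times its movement since the start of the block,
so its total loss is at least `-G (L - 1) S`. The second gives `‖u₀ + ⋯ + uₖ₋₁‖² ≥ k`, so the total
loss vector has norm at least `G L √⌊T/L⌋`, and the best point of the ball gains `D/2` times that.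
-/

open Finset

section Recursion

variable {α : Type*} (f : (i : ℕ) → (Fin i → α) → α)

def histRec : (n : ℕ) → Fin n → α
  | 0 => Fin.elim0
  | n + 1 => Fin.snoc (histRec n) (f n (histRec n))

theorem histRec_apply : ∀ (n : ℕ) (j : Fin n), histRec f n j = f j (histRec f j)
  | n + 1, j => by
    induction j using Fin.lastCases with
    | last => simp [histRec]
    | cast k => simp [histRec, histRec_apply n k]

theorem exists_seq_forall_prefix {P : (i : ℕ) → (Fin i → α) → α → Prop}
    (h : ∀ i p, ∃ x, P i p x) : ∃ u : ℕ → α, ∀ i, P i (fun j => u j) (u i) := by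
  choose next hnext using h
  refine ⟨fun n => next n (histRec next n), fun i => ?_⟩
  convert hnext i (histRec next i) using 2 with j
  exact (histRec_apply next i j).symm

end Recursion

section Sums

theorem sum_Icc_eq_sum_range {M : Type*} [AddCommMonoid M] (f : ℕ → M) (a b : ℕ) :
    ∑ t ∈ Icc a b, f t = ∑ k ∈ range (b + 1 - a), f (k + a) := by
  rw [← Ico_add_one_right_eq_Icc, sum_Ico_eq_sum_range]
  simp_rw [add_comm a]

theorem sum_range_mul_add_comp_div {M : Type*} [AddCommMonoid M] (f : ℕ → M) {L r : ℕ}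
    (q : ℕ) (hr : r ≤ L) :
    ∑ x ∈ range (L * q + r), f (x / L) = L • ∑ j ∈ range q, f j + r • f q := by
  have block : ∀ q r, r ≤ L → ∑ x ∈ range r, f ((L * q + x) / L) = r • f q := by
    intro q r hr
    rw [← card_range r, ← sum_const]
    refine sum_congr (by rw [card_range]) fun x hx => ?_
    have hxL : x < L := (mem_range.1 hx).trans_le hr
    rw [Nat.mul_add_div (by omega), Nat.div_eq_of_lt hxL, add_zero]
  induction q generalizing r with
  | zero => simpa using block 0 r hr
  | succ q ih =>
    have hnext := block (q + 1) r hr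
    rw [Nat.mul_succ] at hnext
    rw [sum_range_add, Nat.mul_succ, ih le_rfl, hnext, sum_range_succ, smul_add]

theorem sum_sum_Ico_le_mul_sum {a : ℕ → ℝ} (ha : ∀ i, 0 ≤ a i) {g : ℕ → ℕ} {L : ℕ}
    (hL : 0 < L) (hg : ∀ s, s < g s + L) (T : ℕ) :
    ∑ s ∈ range T, ∑ i ∈ Ico (g s) s, a i ≤ ((L : ℝ) - 1) * ∑ i ∈ range (T - 1), a i := by
  rw [sum_comm' (t' := range (T - 1))
    (s' := fun i => (Ioo i (i + L)).filter fun s => s < T ∧ g s ≤ i), mul_sum]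
  · refine sum_le_sum fun i _ => ?_
    rw [sum_const, nsmul_eq_mul]
    refine mul_le_mul_of_nonneg_right ?_ (ha i)
    have hcard : #((Ioo i (i + L)).filter fun s => s < T ∧ g s ≤ i) ≤ L - 1 :=
      (card_filter_le _ _).trans (by simp)
    have : ((L - 1 : ℕ) : ℝ) = L - 1 := by rw [Nat.cast_sub hL, Nat.cast_one]
    exact_mod_cast this ▸ (Nat.cast_le.2 hcard)
  · intro s i
    have := hg s
    simp only [mem_range, mem_Ico, mem_filter, mem_Ioo]
    omega

end Sums

section InnerProduct

variable {E : Type*} [NormedAddCommGroup E] [InnerProductSpace ℝ E]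

theorem exists_norm_eq_one_inner_eq_zero (hE : 2 ≤ Module.finrank ℝ E) (a : E) :
    ∃ u : E, ‖u‖ = 1 ∧ ⟪a, u⟫_ℝ = 0 := by
  have : FiniteDimensional ℝ E := Module.finite_of_finrank_pos (by omega)
  have hspan : Module.finrank ℝ (ℝ ∙ a) ≤ 1 :=
    (finrank_span_le_card ({a} : Set E)).trans (by simp)
  have hperp := (ℝ ∙ a).finrank_add_finrank_orthogonal
  obtain ⟨⟨x, hx⟩, hx0⟩ :=
    Module.finrank_pos_iff_exists_ne_zero.1 (show 0 < Module.finrank ℝ (ℝ ∙ a)ᗮ by omega)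
  have hx0 : x ≠ 0 := fun h => hx0 (Subtype.ext h)
  refine ⟨(‖x‖⁻¹ : ℝ) • x, norm_smul_inv_norm hx0, ?_⟩
  rw [inner_smul_right, Submodule.mem_orthogonal_singleton_iff_inner_right.1 hx, mul_zero]

theorem exists_norm_eq_one_inner_nonneg (hE : 2 ≤ Module.finrank ℝ E) (a b : E) :
    ∃ u : E, ‖u‖ = 1 ∧ 0 ≤ ⟪u, a⟫_ℝ ∧ 0 ≤ ⟪u, b⟫_ℝ := by
  obtain ⟨u, hu, hau⟩ := exists_norm_eq_one_inner_eq_zero hE a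
  rcases le_total 0 ⟪u, b⟫_ℝ with hb | hb
  · exact ⟨u, hu, (real_inner_comm a u ▸ hau).ge, hb⟩
  · refine ⟨-u, by rw [norm_neg, hu], ?_, ?_⟩ <;>
      simp [inner_neg_left, real_inner_comm a u ▸ hau, hb]

theorem neg_sum_dist_le_inner {u : E} (hu : ‖u‖ ≤ 1) {v : ℕ → E} {a s : ℕ} (has : a ≤ s)
    (hstart : 0 ≤ ⟪u, v a⟫_ℝ) : -∑ i ∈ Ico a s, dist (v i) (v (i + 1)) ≤ ⟪u, v s⟫_ℝ := by
  have hdrift : ⟪u, v a - v s⟫_ℝ ≤ dist (v a) (v s) := by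
    rw [dist_eq_norm]
    exact (real_inner_le_norm _ _).trans (mul_le_of_le_one_left (norm_nonneg _) hu)
  have := dist_le_Ico_sum_dist v has
  rw [inner_sub_right] at hdrift
  linarith

theorem neg_mul_sum_dist_le_sum_inner {u v : ℕ → E} (hu : ∀ i, ‖u i‖ ≤ 1) {L : ℕ} (hL : 0 < L)
    (hstart : ∀ i, 0 ≤ ⟪u i, v (i * L)⟫_ℝ) (T : ℕ) :
    -(((L : ℝ) - 1) * ∑ i ∈ range (T - 1), dist (v i) (v (i + 1))) ≤
      ∑ s ∈ range T, ⟪u (s / L), v s⟫_ℝ :=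
  calc -(((L : ℝ) - 1) * ∑ i ∈ range (T - 1), dist (v i) (v (i + 1)))
      ≤ ∑ s ∈ range T, -∑ i ∈ Ico (s / L * L) s, dist (v i) (v (i + 1)) := by
        rw [sum_neg_distrib, neg_le_neg_iff]
        exact sum_sum_Ico_le_mul_sum (fun _ => dist_nonneg) hL (fun _ => Nat.lt_div_mul_add hL) T
    _ ≤ ∑ s ∈ range T, ⟪u (s / L), v s⟫_ℝ :=
        sum_le_sum fun s _ => neg_sum_dist_le_inner (hu _) (Nat.div_mul_le_self s L) (hstart _)

theorem natCast_le_norm_sum_range_sq {u : ℕ → E} (hu : ∀ i, ‖u i‖ = 1)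
    (hacc : ∀ k, 0 ≤ ⟪u k, ∑ j ∈ range k, u j⟫_ℝ) (k : ℕ) :
    (k : ℝ) ≤ ‖∑ j ∈ range k, u j‖ ^ 2 := by
  induction k with
  | zero => simp
  | succ k ih =>
    rw [sum_range_succ, norm_add_sq_real, hu, real_inner_comm, Nat.cast_succ]
    nlinarith [hacc k]

theorem sq_mul_div_le_norm_sum_sq {u : ℕ → E} (hu : ∀ i, ‖u i‖ = 1)
    (hacc : ∀ k, 0 ≤ ⟪u k, ∑ j ∈ range k, u j⟫_ℝ) (L T : ℕ) :
    (L : ℝ) ^ 2 * (T / L : ℕ) ≤ ‖∑ s ∈ range T, u (s / L)‖ ^ 2 := by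
  rcases Nat.eq_zero_or_pos L with rfl | hL
  · simp
  have hsplit := sum_range_mul_add_comp_div u (T / L) (Nat.mod_lt T hL).le
  rw [Nat.div_add_mod] at hsplit
  rw [hsplit, ← Nat.cast_smul_eq_nsmul ℝ, ← Nat.cast_smul_eq_nsmul ℝ, norm_add_sq_real, norm_smul,
    real_inner_smul_left, real_inner_smul_right, real_inner_comm]
  have hpart := natCast_le_norm_sum_range_sq hu hacc (T / L)
  have hcross := hacc (T / L)
  simp only [Real.norm_natCast, mul_pow]
  nlinarith [sq_nonneg ‖((T % L : ℕ) : ℝ) • u (T / L)‖,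
    mul_nonneg (mul_nonneg (Nat.cast_nonneg L) (Nat.cast_nonneg (T % L))) hcross]

theorem iInf_inner_closedBall_le (M : E) {r : ℝ} (hr : 0 ≤ r) :
    ⨅ v : Metric.closedBall (0 : E) r, ⟪M, (v : E)⟫_ℝ ≤ -(r * ‖M‖) := by
  have hbdd : BddBelow (Set.range fun v : Metric.closedBall (0 : E) r => ⟪M, (v : E)⟫_ℝ) := by
    refine ⟨-(‖M‖ * r), ?_⟩
    rintro _ ⟨⟨v, hv⟩, rfl⟩
    have := real_inner_le_norm M (-v)
    rw [inner_neg_right, norm_neg] at this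
    have := mul_le_mul_of_nonneg_left (mem_closedBall_zero_iff.1 hv) (norm_nonneg M)
    simp only
    linarith
  obtain ⟨v₀, hv₀, hval⟩ : ∃ v₀ ∈ Metric.closedBall (0 : E) r, ⟪M, v₀⟫_ℝ = -(r * ‖M‖) := by
    rcases eq_or_ne M 0 with rfl | hM
    · exact ⟨0, by simpa using hr, by simp⟩
    · refine ⟨-(r / ‖M‖) • M, ?_, ?_⟩
      · rw [mem_closedBall_zero_iff, norm_smul, norm_neg, Real.norm_of_nonneg (by positivity),
          div_mul_cancel₀ _ (norm_ne_zero_iff.2 hM)]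
      · rw [real_inner_smul_right, real_inner_self_eq_norm_sq]
        field_simp
  exact (ciInf_le hbdd ⟨v₀, hv₀⟩).trans_eq hval

theorem exists_seq_norm_eq_one_inner_nonneg (hE : 2 ≤ Module.finrank ℝ E)
    (σ : (t : ℕ) → (Fin t → E) → E) (L : ℕ) (G : ℝ) :
    ∃ u : ℕ → E, ∀ i, ‖u i‖ = 1 ∧ 0 ≤ ⟪u i, σ (i * L) fun j => G • u (j / L)⟫_ℝ ∧
      0 ≤ ⟪u i, ∑ j ∈ range i, u j⟫_ℝ := by
  obtain ⟨u, hu⟩ := exists_seq_forall_prefix (P := fun i p x => ‖x‖ = 1 ∧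
      0 ≤ ⟪x, σ (i * L) fun j =>
        G • p ⟨j / L, Nat.div_lt_of_lt_mul (j.2.trans_eq (Nat.mul_comm i L))⟩⟫_ℝ ∧
      0 ≤ ⟪x, ∑ j, p j⟫_ℝ)
    fun i p => exists_norm_eq_one_inner_nonneg hE _ _
  exact ⟨u, fun i => by simpa only [Fin.sum_univ_eq_sum_range (fun j => u j)] using hu i⟩

theorem mul_sub_le_regret {u v : ℕ → E} (hu : ∀ i, ‖u i‖ ≤ 1) {L : ℕ} (hL : 0 < L)
    (hstart : ∀ i, 0 ≤ ⟪u i, v (i * L)⟫_ℝ) {G r S : ℝ} (hG : 0 ≤ G) (hr : 0 ≤ r) {T : ℕ}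
    (hmove : ∑ i ∈ range (T - 1), dist (v i) (v (i + 1)) ≤ S) :
    G * (r * ‖∑ s ∈ range T, u (s / L)‖ - ((L : ℝ) - 1) * S) ≤
      G * ∑ s ∈ range T, ⟪u (s / L), v s⟫_ℝ -
        ⨅ x : Metric.closedBall (0 : E) r, ⟪G • ∑ s ∈ range T, u (s / L), (x : E)⟫_ℝ := by
  have hcomparator := iInf_inner_closedBall_le (G • ∑ s ∈ range T, u (s / L)) hr
  rw [norm_smul, Real.norm_of_nonneg hG] at hcomparator
  have hL1 : (0 : ℝ) ≤ L - 1 := sub_nonneg.2 (Nat.one_le_cast.2 hL)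
  have hplayer : -(((L : ℝ) - 1) * S) ≤ ∑ s ∈ range T, ⟪u (s / L), v s⟫_ℝ :=
    (neg_le_neg (mul_le_mul_of_nonneg_left hmove hL1)).trans
      (neg_mul_sum_dist_le_sum_inner hu hL hstart T)
  nlinarith [mul_le_mul_of_nonneg_left hplayer hG]

end InnerProduct

noncomputable def blockLength (D S : ℝ) (T : ℕ) : ℕ := ⌊D ^ 2 * T / (16 * S ^ 2)⌋₊ + 1

theorem mul_sub_le_mul_sub_add_one {q L T : ℝ} (hq : 0 ≤ q) (hqL : q ≤ L) (hLq : L ≤ q + 1)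
    (hqT : q ≤ T) : q * (T - q) ≤ L * (T - L + 1) := by
  rcases le_total L (T - q) with h | h
  · nlinarith [mul_nonneg (sub_nonneg.2 hqL) (sub_nonneg.2 h)]
  · nlinarith [mul_nonneg (sub_nonneg.2 hLq) (sub_nonneg.2 h)]

-- For `q = D²T/(16S²)` one has `L - 1 ≤ q < L`, so the movement allowance `(L - 1)S` is at most
-- `D²T/(16S)`, while the comparator gain `(D/2)L√⌊T/L⌋` is at least `(√15/32)·D²T/S`.
theorem cost_add_target_sq_le_gain_sq {D S : ℝ} (hD : 0 < D) (hDS : D ≤ S) (T : ℕ) :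
    let L := blockLength D S T
    (((L : ℝ) - 1) * S + D * (D * T / S) / 20) ^ 2 ≤
      (D / 2) ^ 2 * ((L : ℝ) ^ 2 * (T / L : ℕ)) := by
  intro L
  have hS : 0 < S := hD.trans_le hDS
  set q := D ^ 2 * T / (16 * S ^ 2) with hq
  have hq0 : 0 ≤ q := by positivity
  have hqS : D ^ 2 * T = 16 * q * S ^ 2 := by rw [hq]; field_simp
  have hqT : q ≤ T / 16 := by
    rw [hq, div_le_div_iff₀ (by positivity) (by norm_num)]
    have : D ^ 2 ≤ S ^ 2 := pow_le_pow_left₀ hD.le hDS 2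
    nlinarith [(Nat.cast_nonneg T : (0 : ℝ) ≤ T)]
  have hLq : (L : ℝ) - 1 ≤ q ∧ q < L := by
    simp only [L, blockLength, Nat.cast_add, Nat.cast_one, add_sub_cancel_right]
    exact ⟨Nat.floor_le hq0, Nat.lt_floor_add_one q⟩
  have hLpos : 0 < L := Nat.succ_pos _
  clear_value L
  have hblocks : (T : ℝ) - L + 1 ≤ L * (T / L : ℕ) := by
    have := Nat.div_add_mod T L
    have := Nat.mod_lt T hLpos
    have : T + 1 ≤ L * (T / L) + L := by omega
    have : ((T + 1 : ℕ) : ℝ) ≤ ((L * (T / L) + L : ℕ) : ℝ) := by exact_mod_cast this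
    push_cast at this
    linarith
  have hcost : ((L : ℝ) - 1) * S + D * (D * T / S) / 20 ≤ 9 / 5 * q * S := by
    have htarget : D * (D * T / S) / 20 = 4 / 5 * q * S := by
      rw [hq]; field_simp; ring
    rw [htarget]; nlinarith
  have hgain : q * (T - q) ≤ L * (T - L + 1) :=
    mul_sub_le_mul_sub_add_one hq0 hLq.2.le (by linarith) (by linarith)
  calc (((L : ℝ) - 1) * S + D * (D * T / S) / 20) ^ 2
      ≤ (9 / 5 * q * S) ^ 2 := by
        refine pow_le_pow_left₀ ?_ hcost 2
        have : (1 : ℝ) ≤ L := by exact_mod_cast hLpos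
        have : 0 ≤ ((L : ℝ) - 1) * S := mul_nonneg (by linarith) hS.le
        positivity
    _ ≤ 15 / 64 * q * (D ^ 2 * T) := by rw [hqS]; nlinarith [sq_nonneg (q * S)]
    _ ≤ D ^ 2 / 4 * (q * (T - q)) := by nlinarith [sq_nonneg D, mul_nonneg hq0 (sq_nonneg D)]
    _ ≤ D ^ 2 / 4 * (L * (L * (T / L : ℕ))) := by
        refine mul_le_mul_of_nonneg_left (hgain.trans ?_) (by positivity)
        exact mul_le_mul_of_nonneg_left hblocks (Nat.cast_nonneg L)
    _ = (D / 2) ^ 2 * ((L : ℝ) ^ 2 * (T / L : ℕ)) := by ring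

theorem stmt1_general (d T : ℕ) (hd : 2 ≤ d) (D G S : ℝ) (hD : 0 < D) (hG : 0 < G)
    (hSlow : D ≤ S)
    (σ : (t : ℕ) → (Fin t → EuclideanSpace ℝ (Fin d)) → EuclideanSpace ℝ (Fin d)) :
    ∃ m : ℕ → EuclideanSpace ℝ (Fin d),
      (∀ t ∈ Finset.Icc 1 T, ‖m t‖ = G) ∧
      (let w : ℕ → EuclideanSpace ℝ (Fin d) :=
        fun t => σ (t - 1) (fun j => m (j.val + 1));
       ¬ (∑ t ∈ Finset.Icc 2 T, ‖w t - w (t - 1)‖ ≤ S) ∨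
       (∑ t ∈ Finset.Icc 1 T, ⟪m t, w t⟫_ℝ) -
          (⨅ v : Metric.closedBall (0 : EuclideanSpace ℝ (Fin d)) (D / 2),
            ⟪∑ t ∈ Finset.Icc 1 T, m t, (v : EuclideanSpace ℝ (Fin d))⟫_ℝ) ≥
        0.05 * D * G * (D * T / S)) := by
  set L := blockLength D S T
  have hLpos : 0 < L := Nat.succ_pos _
  have hrank : 2 ≤ Module.finrank ℝ (EuclideanSpace ℝ (Fin d)) := by
    rwa [finrank_euclideanSpace_fin]
  obtain ⟨u, hu⟩ := exists_seq_norm_eq_one_inner_nonneg hrank σ L G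
  simp only [forall_and] at hu
  obtain ⟨hu1, hstart, hacc⟩ := hu
  refine ⟨fun t => G • u ((t - 1) / L),
    fun t _ => by rw [norm_smul, hu1, Real.norm_of_nonneg hG.le, mul_one], ?_⟩
  intro w
  refine or_iff_not_imp_left.2 fun hmove => ?_
  -- `w (s + 1)` is definitionally `v s`, which is what the `rfl`s below use.
  set v : ℕ → EuclideanSpace ℝ (Fin d) := fun s => σ s fun j => G • u (j / L)
  have hmove' : ∑ i ∈ range (T - 1), dist (v i) (v (i + 1)) ≤ S := by
    rw [not_not, sum_Icc_eq_sum_range, show T + 1 - 2 = T - 1 by omega] at hmove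
    convert hmove using 2 with k
    rw [dist_comm, dist_eq_norm]
    rfl
  have hplay : ∑ t ∈ Icc 1 T, ⟪G • u ((t - 1) / L), w t⟫_ℝ =
      G * ∑ s ∈ range T, ⟪u (s / L), v s⟫_ℝ := by
    rw [sum_Icc_eq_sum_range, Nat.add_sub_cancel, mul_sum]
    exact sum_congr rfl fun s _ => real_inner_smul_left _ _ _
  have hcomp : ∑ t ∈ Icc 1 T, G • u ((t - 1) / L) = G • ∑ s ∈ range T, u (s / L) := by
    rw [sum_Icc_eq_sum_range, Nat.add_sub_cancel, smul_sum]
    rfl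
  have hgain :
      ((L : ℝ) - 1) * S + D * (D * T / S) / 20 ≤ D / 2 * ‖∑ s ∈ range T, u (s / L)‖ := by
    refine le_of_pow_le_pow_left₀ two_ne_zero (by positivity) ?_
    rw [mul_pow]
    exact (cost_add_target_sq_le_gain_sq hD hSlow T).trans
      (mul_le_mul_of_nonneg_left (sq_mul_div_le_norm_sum_sq hu1 hacc L T) (by positivity))
  have htarget : (0.05 : ℝ) * D * G * (D * T / S) = G * (D * (D * T / S) / 20) := by
    norm_num; ring
  rw [hplay, hcomp, ge_iff_le, htarget]
  exact (mul_le_mul_of_nonneg_left (le_sub_iff_add_le'.2 hgain) hG.le).trans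
    (mul_sub_le_regret (fun i => (hu1 i).le) hLpos hstart hG.le (by positivity) hmove')

/-- For `d ≥ 2`, `T ≥ 1`, `D, G > 0`, any switching budget `S` with
`D ≤ S < D√T`, and every deterministic player strategy `σ`, there exist loss vectors of norm `G`
such that either the continuous switching constraint `∑_{t=2}^T ‖w t − w (t−1)‖ ≤ S` is violated,
or the regret is at least `0.05 · D · G · (D·T/S)`. -/
theorem stmt1 (d T : ℕ) (hd : 2 ≤ d) (hT : 1 ≤ T) (D G S : ℝ) (hD : 0 < D) (hG : 0 < G)
    (hSlow : D ≤ S) (hShigh : S < D * Real.sqrt T)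
    (σ : (t : ℕ) → (Fin t → EuclideanSpace ℝ (Fin d)) → EuclideanSpace ℝ (Fin d))
    (hσ : ∀ t ms, σ t ms ∈ Metric.closedBall (0 : EuclideanSpace ℝ (Fin d)) (D / 2)) :
    ∃ m : ℕ → EuclideanSpace ℝ (Fin d),
      (∀ t ∈ Finset.Icc 1 T, ‖m t‖ = G) ∧
      (let w : ℕ → EuclideanSpace ℝ (Fin d) :=
        fun t => σ (t - 1) (fun j => m (j.val + 1));
       ¬ (∑ t ∈ Finset.Icc 2 T, ‖w t - w (t - 1)‖ ≤ S) ∨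
       (∑ t ∈ Finset.Icc 1 T, ⟪m t, w t⟫_ℝ) -
          (⨅ v : Metric.closedBall (0 : EuclideanSpace ℝ (Fin d)) (D / 2),
            ⟪∑ t ∈ Finset.Icc 1 T, m t, (v : EuclideanSpace ℝ (Fin d))⟫_ℝ) ≥
        0.05 * D * G * (D * T / S)) :=
  stmt1_general d T hd D G S hD hG hSlow σ
end

section
/- Let each f_t : ℝ^d → ℝ, t = 1, …, T, be convex and differentiable with ‖∇f_t(w)‖ ≤ G for all w ∈ 𝒟, let w_1 ∈ 𝒟, and define iterates of online gradient descent by w_{t+1} = Π(w_t − η·∇f_t(w_t)) with step size η = S/(G·T). If the switching budget S satisfies D ≤ S < D√T, then the continuous switching constraint Σ_{t=2}^T ‖w_t − w_{t−1}‖ ≤ S holds, and the regret satisfies R = Σ_{t=1}^T f_t(w_t) − min_{w ∈ 𝒟} Σ_{t=1}^T f_t(w) ≤ D·G·(D·T/S). -/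
/-!
Projecting onto the ball does not increase the distance to any point `v` of the ball, so
`‖w_{t+1} - v‖² ≤ ‖w_t - η g_t - v‖²`, where `g_t = ∇f_t(w_t)`. Expanding the square and using
`f_t(w_t) - f_t(v) ≤ ⟪g_t, w_t - v⟫` (convexity), the regret against `v` telescopes to at most
`D²/(2η) + TηG²/2`, which for `η = S/(GT)` is `D²GT/(2S) + SG/2 ≤ DG·DT/S` as soon as `S² ≤ D²T`.
Each step moves the iterate by at most `ηG = S/T`, so the total movement is at most `S`.
-/

open scoped InnerProductSpace BigOperators

/-- Euclidean projection onto the ball `{w : ‖w‖ ≤ D/2}` in `ℝ^d`. -/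
noncomputable def ballProj (d : ℕ) (D : ℝ) (p : EuclideanSpace ℝ (Fin d)) :
    EuclideanSpace ℝ (Fin d) :=
  if ‖p‖ ≤ D / 2 then p else (D / (2 * ‖p‖)) • p

open Finset

theorem sum_le_sub_add_of_le_sub_succ {α : Type*} [AddCommGroup α] [PartialOrder α]
    [IsOrderedAddMonoid α] {a B : ℕ → α} {c : α} {T : ℕ}
    (h : ∀ t ∈ Icc 1 T, a t ≤ B t - B (t + 1) + c) :
    ∑ t ∈ Icc 1 T, a t ≤ B 1 - B (T + 1) + T • c := by
  induction T with
  | zero => simp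
  | succ n ih =>
    rw [sum_Icc_succ_top (Nat.le_add_left 1 n), succ_nsmul]
    calc ∑ t ∈ Icc 1 n, a t + a (n + 1)
        ≤ (B 1 - B (n + 1) + n • c) + (B (n + 1) - B (n + 1 + 1) + c) :=
          add_le_add (ih fun t ht ↦ h t (Icc_subset_Icc_right n.le_succ ht)) (h _ (by simp))
      _ = B 1 - B (n + 1 + 1) + (n • c + c) := by abel

section InnerProductSpace

variable {E : Type*} [NormedAddCommGroup E] [InnerProductSpace ℝ E]

lemma norm_div_norm_smul_sub_le {p v : E} {r : ℝ} (hr : r < ‖p‖) (hv : ‖v‖ ≤ r) :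
    ‖(r / ‖p‖) • p - v‖ ≤ ‖p - v‖ := by
  have hp : 0 < ‖p‖ := (norm_nonneg v).trans_lt (hv.trans_lt hr)
  set c := r / ‖p‖
  have hcp : c * ‖p‖ = r := div_mul_cancel₀ r hp.ne'
  have hc0 : 0 ≤ c := div_nonneg ((norm_nonneg v).trans hv) hp.le
  have hc1 : c ≤ 1 := (div_le_one hp).2 hr.le
  have hpv : ⟪p, v⟫_ℝ ≤ c * ‖p‖ ^ 2 := by
    calc ⟪p, v⟫_ℝ ≤ ‖p‖ * ‖v‖ := real_inner_le_norm p v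
      _ ≤ ‖p‖ * r := by gcongr
      _ = c * ‖p‖ ^ 2 := by rw [← hcp]; ring
  rw [← pow_le_pow_iff_left₀ (norm_nonneg _) (norm_nonneg _) two_ne_zero, norm_sub_sq_real,
    norm_sub_sq_real, norm_smul, real_inner_smul_left, Real.norm_of_nonneg hc0]
  -- `‖p - v‖² - ‖c • p - v‖² = (1 - c) * ((1 + c) * ‖p‖² - 2 * ⟪p, v⟫)`
  nlinarith [mul_nonneg (sub_nonneg.2 hc1) (sub_nonneg.2 hpv)]

lemma inner_sub_le_of_le_norm_sub_sq {x g v : E} {η a : ℝ} (hη : 0 < η)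
    (ha : a ≤ ‖x - η • g - v‖ ^ 2) :
    ⟪g, x - v⟫_ℝ ≤ ‖x - v‖ ^ 2 / (2 * η) - a / (2 * η) + η * ‖g‖ ^ 2 / 2 := by
  have hexp : ‖x - η • g - v‖ ^ 2 = ‖x - v‖ ^ 2 - 2 * η * ⟪g, x - v⟫_ℝ + η ^ 2 * ‖g‖ ^ 2 := by
    rw [show x - η • g - v = (x - v) - η • g by abel, norm_sub_sq_real, real_inner_smul_right,
      norm_smul, Real.norm_of_nonneg hη.le, real_inner_comm]
    ring
  have hcross : 2 * η * ⟪g, x - v⟫_ℝ ≤ ‖x - v‖ ^ 2 - a + η ^ 2 * ‖g‖ ^ 2 := by linarith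
  field_simp
  linarith

theorem sum_inner_sub_le_of_norm_sub_le {w g : ℕ → E} {v : E} {η G R : ℝ} {T : ℕ} (hη : 0 < η)
    (hg : ∀ t ∈ Icc 1 T, ‖g t‖ ≤ G) (hw1 : ‖w 1 - v‖ ≤ R)
    (hstep : ∀ t ∈ Ico 1 T, ‖w (t + 1) - v‖ ≤ ‖w t - η • g t - v‖) :
    ∑ t ∈ Icc 1 T, ⟪g t, w t - v⟫_ℝ ≤ R ^ 2 / (2 * η) + T * (η * G ^ 2 / 2) := by
  -- `w (T + 1)` is unconstrained, so the potential is cut off after time `T`.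
  set A : ℕ → ℝ := fun t ↦ if t ≤ T then ‖w t - v‖ ^ 2 else 0
  have hA : ∀ t ∈ Icc 1 T,
      ⟪g t, w t - v⟫_ℝ ≤ A t / (2 * η) - A (t + 1) / (2 * η) + η * G ^ 2 / 2 := by
    intro t ht
    obtain ⟨ht1, htT⟩ := mem_Icc.1 ht
    have hnext : A (t + 1) ≤ ‖w t - η • g t - v‖ ^ 2 := by
      by_cases h : t + 1 ≤ T
      · simp only [A, if_pos h]
        gcongr
        exact hstep t (mem_Ico.2 ⟨ht1, h⟩)
      · simp only [A, if_neg h]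
        positivity
    calc ⟪g t, w t - v⟫_ℝ
        ≤ ‖w t - v‖ ^ 2 / (2 * η) - A (t + 1) / (2 * η) + η * ‖g t‖ ^ 2 / 2 :=
          inner_sub_le_of_le_norm_sub_sq hη hnext
      _ ≤ A t / (2 * η) - A (t + 1) / (2 * η) + η * G ^ 2 / 2 := by
          simp only [A, if_pos htT]
          gcongr
          exact hg t ht
  have hA1 : A 1 ≤ R ^ 2 := by
    simp only [A]
    split_ifs
    · exact pow_le_pow_left₀ (norm_nonneg _) hw1 2
    · positivity
  calc ∑ t ∈ Icc 1 T, ⟪g t, w t - v⟫_ℝ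
      ≤ A 1 / (2 * η) - A (T + 1) / (2 * η) + T • (η * G ^ 2 / 2) :=
        sum_le_sub_add_of_le_sub_succ hA
    _ ≤ R ^ 2 / (2 * η) + T * (η * G ^ 2 / 2) := by
        simp only [A, if_neg (Nat.not_succ_le_self T), zero_div, sub_zero, nsmul_eq_mul]
        gcongr

end InnerProductSpace

theorem ConvexOn.sub_le_of_hasFDerivAt {F : Type*} [NormedAddCommGroup F] [NormedSpace ℝ F]
    {s : Set F} {f : F → ℝ} {f' : F →L[ℝ] ℝ} {x y : F} (hf : ConvexOn ℝ s f) (hx : x ∈ s)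
    (hy : y ∈ s) (hf' : HasFDerivAt f f' x) : f x - f y ≤ f' (x - y) := by
  set γ : ℝ →ᵃ[ℝ] F := AffineMap.lineMap x y
  have hγ0 : γ 0 = x := AffineMap.lineMap_apply_zero x y
  have hγ1 : γ 1 = y := AffineMap.lineMap_apply_one x y
  have hφ' : HasDerivAt (f ∘ γ) (f' (y - x)) 0 := by
    rw [← hγ0] at hf'
    exact hf'.comp_hasDerivAt 0 AffineMap.hasDerivAt_lineMap
  have hslope := (hf.comp_affineMap γ).le_slope_of_hasDerivAt (by simpa [hγ0] using hx)
    (by simpa [hγ1] using hy) zero_lt_one hφ'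
  simp only [slope_def_field, Function.comp_apply, hγ0, hγ1, sub_zero, div_one] at hslope
  rw [← neg_sub y x, map_neg]
  linarith

theorem ConvexOn.sub_le_inner_gradient {E : Type*} [NormedAddCommGroup E] [InnerProductSpace ℝ E]
    [CompleteSpace E] {s : Set E} {f : E → ℝ} {x y : E} (hf : ConvexOn ℝ s f) (hx : x ∈ s)
    (hy : y ∈ s) (hfx : DifferentiableAt ℝ f x) : f x - f y ≤ ⟪gradient f x, x - y⟫_ℝ := by
  simpa using hf.sub_le_of_hasFDerivAt hx hy hfx.hasGradientAt.hasFDerivAt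

section BallProj

variable {d : ℕ} {D : ℝ}

lemma norm_ballProj_le (hD : 0 ≤ D) (p : EuclideanSpace ℝ (Fin d)) :
    ‖ballProj d D p‖ ≤ D / 2 := by
  unfold ballProj
  split_ifs with h
  · exact h
  · have hp : 0 < ‖p‖ := by linarith
    rw [norm_smul, Real.norm_of_nonneg (by positivity)]
    field_simp
    rfl

lemma norm_ballProj_sub_le {v : EuclideanSpace ℝ (Fin d)} (hv : ‖v‖ ≤ D / 2)
    (p : EuclideanSpace ℝ (Fin d)) : ‖ballProj d D p - v‖ ≤ ‖p - v‖ := by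
  unfold ballProj
  split_ifs with h
  · exact le_rfl
  · rw [← div_div]
    exact norm_div_norm_smul_sub_le (not_le.1 h) hv

lemma norm_ballProj_sub_smul_sub_le {x : EuclideanSpace ℝ (Fin d)} (hx : ‖x‖ ≤ D / 2)
    {η : ℝ} (hη : 0 ≤ η) (g : EuclideanSpace ℝ (Fin d)) :
    ‖ballProj d D (x - η • g) - x‖ ≤ η * ‖g‖ := by
  simpa [norm_smul, Real.norm_of_nonneg hη] using norm_ballProj_sub_le hx (x - η • g)

lemma norm_le_of_eq_ballProj {w u : ℕ → EuclideanSpace ℝ (Fin d)} {T : ℕ} (hD : 0 ≤ D)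
    (hw1 : ‖w 1‖ ≤ D / 2) (hw : ∀ t ∈ Ico 1 T, w (t + 1) = ballProj d D (u t)) :
    ∀ t ∈ Icc 1 T, ‖w t‖ ≤ D / 2 := by
  intro t ht
  obtain ⟨ht1, htT⟩ := mem_Icc.1 ht
  rcases ht1.eq_or_lt with rfl | ht1
  · exact hw1
  · obtain ⟨s, rfl⟩ := Nat.exists_eq_add_of_lt ht1
    rw [hw _ (mem_Ico.2 ⟨by omega, by omega⟩)]
    exact norm_ballProj_le hD _

end BallProj

lemma sum_Icc_norm_sub_le {E : Type*} [SeminormedAddGroup E] {w : ℕ → E} {T : ℕ} {c : ℝ}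
    (h : ∀ t ∈ Ico 1 T, ‖w (t + 1) - w t‖ ≤ c) :
    ∑ t ∈ Icc 2 T, ‖w t - w (t - 1)‖ ≤ (T - 1 : ℕ) * c := by
  calc ∑ t ∈ Icc 2 T, ‖w t - w (t - 1)‖ ≤ #(Icc 2 T) • c := by
        refine sum_le_card_nsmul _ _ _ fun t ht ↦ ?_
        obtain ⟨ht2, htT⟩ := mem_Icc.1 ht
        simpa [Nat.sub_add_cancel (by omega : 1 ≤ t)] using
          h (t - 1) (mem_Ico.2 ⟨by omega, by omega⟩)
    _ = (T - 1 : ℕ) * c := by rw [Nat.card_Icc, nsmul_eq_mul]; rfl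

lemma ogd_bound_le {G S T η : ℝ} (D : ℝ) (hG : 0 < G) (hS : 0 < S) (hT : 0 < T)
    (hη : η = S / (G * T)) (hST : S ≤ D * √T) :
    D ^ 2 / (2 * η) + T * (η * G ^ 2 / 2) ≤ D * G * (D * T / S) := by
  have hS2 : S ^ 2 ≤ D ^ 2 * T := by
    calc S ^ 2 ≤ (D * √T) ^ 2 := pow_le_pow_left₀ hS.le hST 2
      _ = D ^ 2 * T := by rw [mul_pow, Real.sq_sqrt hT.le]
  subst hη
  field_simp
  nlinarith

/-- Online gradient descent with step size `η = S/(G·T)` on convex losses with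
gradients bounded by `G` on the ball `𝒟`: if `D ≤ S < D√T`, then the continuous switching
constraint holds and the regret is at most `D·G·(D·T/S)`. -/
theorem stmt9 (d T : ℕ) (hT : 1 ≤ T) (D G S : ℝ) (hD : 0 < D) (hG : 0 < G)
    (hSlow : D ≤ S) (hShigh : S < D * Real.sqrt T)
    (f : ℕ → EuclideanSpace ℝ (Fin d) → ℝ)
    (hconv : ∀ t ∈ Finset.Icc 1 T, ConvexOn ℝ Set.univ (f t))
    (hdiff : ∀ t ∈ Finset.Icc 1 T, Differentiable ℝ (f t))
    (hgrad : ∀ t ∈ Finset.Icc 1 T,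
      ∀ v ∈ Metric.closedBall (0 : EuclideanSpace ℝ (Fin d)) (D / 2), ‖gradient (f t) v‖ ≤ G)
    (η : ℝ) (hη : η = S / (G * T))
    (w : ℕ → EuclideanSpace ℝ (Fin d))
    (hw1 : w 1 ∈ Metric.closedBall (0 : EuclideanSpace ℝ (Fin d)) (D / 2))
    (hupd : ∀ t ∈ Finset.Icc 1 (T - 1), w (t + 1) = ballProj d D (w t - η • gradient (f t) (w t))) :
    (∑ t ∈ Finset.Icc 2 T, ‖w t - w (t - 1)‖ ≤ S) ∧
    (∑ t ∈ Finset.Icc 1 T, f t (w t)) -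
        (⨅ v : Metric.closedBall (0 : EuclideanSpace ℝ (Fin d)) (D / 2),
          ∑ t ∈ Finset.Icc 1 T, f t (v : EuclideanSpace ℝ (Fin d))) ≤
      D * G * (D * T / S) := by
  have hS : 0 < S := hD.trans_le hSlow
  have hT0 : (0 : ℝ) < T := by exact_mod_cast hT
  have hη0 : 0 < η := hη ▸ by positivity
  set g := fun t ↦ gradient (f t) (w t)
  have hw : ∀ t ∈ Ico 1 T, w (t + 1) = ballProj d D (w t - η • g t) :=
    fun t ht ↦ hupd t (by simp only [mem_Ico, mem_Icc] at ht ⊢; omega)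
  rw [mem_closedBall_zero_iff] at hw1
  have hball := norm_le_of_eq_ballProj hD.le hw1 hw
  have hg : ∀ t ∈ Icc 1 T, ‖g t‖ ≤ G :=
    fun t ht ↦ hgrad t ht _ (mem_closedBall_zero_iff.2 (hball t ht))
  constructor
  · calc ∑ t ∈ Icc 2 T, ‖w t - w (t - 1)‖ ≤ (T - 1 : ℕ) * (η * G) :=
          sum_Icc_norm_sub_le fun t ht ↦ hw t ht ▸
            (norm_ballProj_sub_smul_sub_le (hball t (Ico_subset_Icc_self ht)) hη0.le _).trans
              (by gcongr; exact hg t (Ico_subset_Icc_self ht))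
      _ ≤ T * (η * G) := by gcongr; exact_mod_cast T.sub_le 1
      _ = S := by rw [hη]; field_simp
  · have : Nonempty (Metric.closedBall (0 : EuclideanSpace ℝ (Fin d)) (D / 2)) :=
      ⟨⟨0, Metric.mem_closedBall_self (by positivity)⟩⟩
    rw [sub_le_comm]
    refine le_ciInf fun ⟨v, hv⟩ ↦ ?_
    rw [mem_closedBall_zero_iff] at hv
    have hregret : ∑ t ∈ Icc 1 T, (f t (w t) - f t v) ≤ D * G * (D * T / S) :=
      calc ∑ t ∈ Icc 1 T, (f t (w t) - f t v) ≤ ∑ t ∈ Icc 1 T, ⟪g t, w t - v⟫_ℝ :=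
            sum_le_sum fun t ht ↦
              (hconv t ht).sub_le_inner_gradient trivial trivial (hdiff t ht _)
        _ ≤ D ^ 2 / (2 * η) + T * (η * G ^ 2 / 2) :=
            sum_inner_sub_le_of_norm_sub_le hη0 hg ((norm_sub_le _ _).trans (by linarith))
              fun t ht ↦ hw t ht ▸ norm_ballProj_sub_le hv _
        _ ≤ D * G * (D * T / S) := ogd_bound_le D hG hS hT0 hη hShigh.le
    rw [sum_sub_distrib] at hregret
    linarith
end
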